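/- Let F be a field, A a commutative F-algebra, and I ⊆ A an ideal. For every i ≥ 1, the A-module Ω^i_{(A,I)/F} = ker(Ω^i_{A/F} → Ω^i_{(A/I)/F}) is generated as an A-module by the elements a₀·da₁ ∧ ⋯ ∧ da_i with a₀, a₁, …, a_i ∈ A such that a_p ∈ I for at least one index p ∈ {0, 1, …, i}. -/

import Mathlib

open ExteriorAlgebra

section
variable (F A B : Type*) [CommRing F] [CommRing A] [CommRing B]
  [Algebra F A] [Algebra F B] [Algebra A B] [IsScalarTower F A B]

/-- The natural algebra map on exterior algebras of Kähler differentials induced by `A → B`. -/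
noncomputable def kaehlerExtMap :
    ExteriorAlgebra A (Ω[A⁄F]) →ₐ[A] ExteriorAlgebra B (Ω[B⁄F]) :=
  ExteriorAlgebra.lift A
    ⟨((ExteriorAlgebra.ι B).restrictScalars A).comp (KaehlerDifferential.map F F A B),
      fun _ => ExteriorAlgebra.ι_sq_zero _⟩

theorem kaehlerExtMap_mem (i : ℕ) (x : ExteriorAlgebra A (Ω[A⁄F]))
    (hx : x ∈ ⋀[A]^i (Ω[A⁄F])) :
    kaehlerExtMap F A B x ∈ ⋀[B]^i (Ω[B⁄F]) := by
  rw [← ExteriorAlgebra.ιMulti_span_fixedDegree] at hx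
  induction hx using Submodule.span_induction with
  | mem x h =>
      obtain ⟨v, rfl⟩ := h
      have : kaehlerExtMap F A B (ExteriorAlgebra.ιMulti A i v) =
          ExteriorAlgebra.ιMulti B i (fun j => KaehlerDifferential.map F F A B (v j)) := by
        rw [ExteriorAlgebra.ιMulti_apply, ExteriorAlgebra.ιMulti_apply, map_list_prod]
        simp only [List.map_ofFn]
        have hfun : (⇑(kaehlerExtMap F A B) ∘ fun j : Fin i => ExteriorAlgebra.ι A (v j)) =
            fun j : Fin i => ExteriorAlgebra.ι B (KaehlerDifferential.map F F A B (v j)) := by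
          funext j
          exact ExteriorAlgebra.lift_ι_apply (R := A) _ _ (v j)
        rw [hfun]
      rw [this]
      exact ExteriorAlgebra.ιMulti_range B i (Set.mem_range_self _)
  | zero => simp
  | add x y _ _ hx hy => rw [map_add]; exact Submodule.add_mem _ hx hy
  | smul a x _ hx =>
      rw [map_smul, ← IsScalarTower.algebraMap_smul B a (kaehlerExtMap F A B x)]
      exact Submodule.smul_mem _ _ hx

/-- The natural map `Ω^i_{A/F} → Ω^i_{B/F}` on `i`-th exterior powers of Kähler differentials
induced by the `F`-algebra map `A → B`. -/
noncomputable def kaehlerPowMap (i : ℕ) :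
    ⋀[A]^i (Ω[A⁄F]) →ₗ[A] ⋀[B]^i (Ω[B⁄F]) where
  toFun x := ⟨kaehlerExtMap F A B x.1, kaehlerExtMap_mem F A B i x.1 x.2⟩
  map_add' x y := Subtype.ext (by simp)
  map_smul' a x := Subtype.ext (by simp)

end

/-!
Write `B = A ⧸ I` and `S` for the span of the elements `a₀ · da₁ ∧ ⋯ ∧ daₙ` with some `aₚ ∈ I`.
The conormal sequence `I/I² → B ⊗ Ω_A → Ω_B → 0` shows that `ker (Ω_A → Ω_B) = I · Ω_A + d(I)`,
and from this, every wedge `v₁ ∧ ⋯ ∧ vₙ` with one factor in that kernel lies in `S`. Since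
`I · Ω^n_A ⊆ S`, the quotient `Ω^n_A ⧸ S` is a `B`-module, and `v ↦ [v₁ ∧ ⋯ ∧ vₙ]` descends along
the surjection `Ω_A → Ω_B` to a `B`-alternating map. By the universal property of `⋀^n_B Ω_B` this
gives a map `Ω^n_B → Ω^n_A ⧸ S` whose composite with `Ω^n_A → Ω^n_B` is the quotient map, so the
kernel of `Ω^n_A → Ω^n_B` lies in `S`.
-/
theorem MultilinearMap.map_eq_map_of_comp_eq {R ι M N Q : Type*} [Ring R] [Fintype ι]
    [AddCommGroup M] [Module R M] [AddCommGroup N] [Module R N] [AddCommGroup Q] [Module R Q]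
    (α : MultilinearMap R (fun _ : ι => M) Q) (f : M →ₗ[R] N)
    (hα : ∀ v i, f (v i) = 0 → α v = 0) {v w : ι → M} (h : f ∘ v = f ∘ w) :
    α v = α w := by
  classical
  suffices ∀ s : Finset ι, α (s.piecewise w v) = α v by simpa using (this Finset.univ).symm
  intro s
  induction s using Finset.induction_on with
  | empty => simp
  | insert i s hi ih =>
    have hzero : α (Function.update (s.piecewise w v) i (w i - v i)) = 0 :=
      hα _ i (by simpa [sub_eq_zero] using (congrFun h i).symm)
    rw [α.map_update_sub, sub_eq_zero, ← s.piecewise_eq_of_notMem w v hi,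
      Function.update_eq_self, ih] at hzero
    rw [Finset.piecewise_insert, hzero]

theorem AlternatingMap.exists_apply_comp_eq_of_surjective {R S ι M N Q : Type*} [CommRing R]
    [Semiring S] [Algebra R S] [Fintype ι]
    [AddCommGroup M] [Module R M] [AddCommGroup N] [Module R N] [Module S N] [IsScalarTower R S N]
    [AddCommGroup Q] [Module R Q] [Module S Q] [IsScalarTower R S Q]
    (hRS : Function.Surjective (algebraMap R S)) {f : M →ₗ[R] N} (hf : Function.Surjective f)
    (α : M [⋀^ι]→ₗ[R] Q) (hα : ∀ v i, f (v i) = 0 → α v = 0) :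
    ∃ β : N [⋀^ι]→ₗ[S] Q, ∀ v, β (f ∘ v) = α v := by
  classical
  set g := Function.surjInv hf
  have hfg : ∀ y, f (g y) = y := Function.surjInv_eq hf
  have hcongr : ∀ {v w : ι → M}, f ∘ v = f ∘ w → α v = α w :=
    α.toMultilinearMap.map_eq_map_of_comp_eq f hα
  have hupdate : ∀ [DecidableEq ι] (v : ι → M) i {x y}, f x = f y →
      α (Function.update v i x) = α (Function.update v i y) := fun v i x y hxy =>
    hcongr <| funext fun j => by rcases eq_or_ne j i with rfl | hj <;> simp [*]
  refine ⟨{ toFun := fun w => α (g ∘ w)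
            map_update_add' := fun w i x y => ?_
            map_update_smul' := fun w i s x => ?_
            map_eq_zero_of_eq' := fun w i j hw hij => α.map_eq_zero_of_eq _ (by simp [hw]) hij },
    fun v => hcongr <| funext fun i => hfg _⟩
  · simp only [Function.comp_update]
    rw [hupdate _ i (y := g x + g y) (by simp [hfg]), α.map_update_add]
  · obtain ⟨r, rfl⟩ := hRS s
    simp only [Function.comp_update]
    rw [hupdate _ i (y := r • g x) (by simp [hfg]), α.map_update_smul, algebraMap_smul]

theorem exteriorPower.linearMap_apply_mem_of_span_range_eq_top {R M X ι : Type*} [CommRing R]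
    [AddCommGroup M] [Module R M] [AddCommGroup X] [Module R X] {n : ℕ} {g : ι → M}
    (hg : Submodule.span R (Set.range g) = ⊤) {φ : ⋀[R]^n M →ₗ[R] X} {P : Submodule R X}
    (h : ∀ b : Fin n → ι, φ (exteriorPower.ιMulti R n (g ∘ b)) ∈ P) (x : ⋀[R]^n M) :
    φ x ∈ P := by
  have hx : x ∈ Submodule.span R (exteriorPower.ιMulti R n '' {v | Set.range v ⊆ Set.range g}) :=
    by rw [exteriorPower.ιMulti_span_of_span R n M hg]; trivial
  refine (Submodule.span_le (p := P.comap φ)).2 ?_ hx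
  rintro _ ⟨v, hv, rfl⟩
  choose b hb using fun j => hv (Set.mem_range_self j)
  obtain rfl : v = g ∘ b := funext fun j => (hb j).symm
  exact h b

theorem kaehlerPowMap_ιMulti (F A B : Type*) [CommRing F] [CommRing A] [CommRing B]
    [Algebra F A] [Algebra F B] [Algebra A B] [IsScalarTower F A B] {n : ℕ}
    (v : Fin n → Ω[A⁄F]) :
    kaehlerPowMap F A B n (exteriorPower.ιMulti A n v) =
      exteriorPower.ιMulti B n (KaehlerDifferential.map F F A B ∘ v) := by
  ext
  simp only [kaehlerPowMap, kaehlerExtMap, LinearMap.coe_mk, AddHom.coe_mk,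
    exteriorPower.ιMulti_apply_coe, ιMulti_apply, map_list_prod, List.map_ofFn, Function.comp_def]
  exact congrArg _ (List.ofFn_inj.2 (funext fun j => ExteriorAlgebra.lift_ι_apply _ _ _ _))

section

open KaehlerDifferential

variable (F A : Type*) [CommRing F] [CommRing A] [Algebra F A] (I : Ideal A)

theorem KaehlerDifferential.exists_sub_D_mem_of_map_quotient_eq_zero {x : Ω[A⁄F]}
    (hx : map F F A (A ⧸ I) x = 0) : ∃ c ∈ I, x - D F A c ∈ I • (⊤ : Submodule A Ω[A⁄F]) := by
  have hsurj : Function.Surjective (algebraMap A (A ⧸ I)) := Ideal.Quotient.mk_surjective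
  have h1 : (1 : A ⧸ I) ⊗ₜ[A] x ∈ LinearMap.range (kerCotangentToTensor F A (A ⧸ I)) :=
    (exact_kerCotangentToTensor_mapBaseChange F A (A ⧸ I) hsurj _).1 (by simp [hx])
  obtain ⟨z, hz⟩ := h1
  obtain ⟨⟨c, hc⟩, rfl⟩ := Ideal.toCotangent_surjective _ z
  refine ⟨c, by simpa [Ideal.Quotient.eq_zero_iff_mem] using hc, ?_⟩
  rw [← Submodule.Quotient.mk_eq_zero, ← TensorProduct.quotTensorEquivQuotSMul_mk_one_tmul,
    TensorProduct.tmul_sub, ← hz, kerCotangentToTensor_toCotangent, sub_self, map_zero]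

noncomputable def relKaehlerSpan (n : ℕ) : Submodule A (⋀[A]^n Ω[A⁄F]) :=
  Submodule.span A {ω | ∃ a : Fin (n + 1) → A, (∃ p, a p ∈ I) ∧
    (ω : ExteriorAlgebra A Ω[A⁄F]) =
      a 0 • ExteriorAlgebra.ιMulti A n (fun j : Fin n => D F A (a j.succ))}

variable {F A I}

theorem smul_ιMulti_D_mem_relKaehlerSpan {n : ℕ} {a₀ : A} {b : Fin n → A}
    (h : a₀ ∈ I ∨ ∃ p, b p ∈ I) :
    a₀ • exteriorPower.ιMulti A n (D F A ∘ b) ∈ relKaehlerSpan F A I n := by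
  refine Submodule.subset_span ⟨Fin.cons a₀ b, ?_, rfl⟩
  rcases h with h | ⟨p, hp⟩
  exacts [⟨0, h⟩, ⟨p.succ, hp⟩]

variable (F A I) in
theorem ideal_smul_top_le_relKaehlerSpan (n : ℕ) : I • ⊤ ≤ relKaehlerSpan F A I n :=
  Submodule.smul_le.2 fun r hr x _ =>
    exteriorPower.linearMap_apply_mem_of_span_range_eq_top (span_range_derivation F A)
      (φ := r • LinearMap.id) (fun _ => smul_ιMulti_D_mem_relKaehlerSpan (.inl hr)) x

theorem ιMulti_vecCons_D_mem_relKaehlerSpan {n : ℕ} {c : A} (hc : c ∈ I) (t : Fin n → Ω[A⁄F]) :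
    exteriorPower.ιMulti A (n + 1) (Matrix.vecCons (D F A c) t) ∈
      relKaehlerSpan F A I (n + 1) := by
  have hgen (b : Fin n → A) :
      exteriorPower.ιMulti A (n + 1) (Matrix.vecCons (D F A c) (D F A ∘ b)) ∈
        relKaehlerSpan F A I (n + 1) := by
    have := smul_ιMulti_D_mem_relKaehlerSpan (F := F) (a₀ := 1) (b := Fin.cons c b) (.inr ⟨0, hc⟩)
    rwa [one_smul, Fin.comp_cons] at this
  simpa using exteriorPower.linearMap_apply_mem_of_span_range_eq_top (span_range_derivation F A)
    (φ := exteriorPower.alternatingMapLinearEquiv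
      ((exteriorPower.ιMulti A (n + 1)).curryLeft (D F A c)))
    (by simpa using hgen) (exteriorPower.ιMulti A n t)

theorem ιMulti_mem_relKaehlerSpan_of_eq_D {n : ℕ} (v : Fin n → Ω[A⁄F]) {p : Fin n} {c : A}
    (hc : c ∈ I) (hv : v p = D F A c) :
    exteriorPower.ιMulti A n v ∈ relKaehlerSpan F A I n := by
  cases n with
  | zero => exact p.elim0
  | succ n =>
    set σ := Equiv.swap 0 p
    have hvσ : v = (v ∘ σ) ∘ σ := by funext j; simp [σ]
    rw [hvσ, AlternatingMap.map_perm, ← Matrix.cons_head_tail (v ∘ σ)]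
    refine Submodule.smul_mem _ _ ?_
    simpa [Matrix.vecHead, σ, hv] using
      ιMulti_vecCons_D_mem_relKaehlerSpan hc (Matrix.vecTail (v ∘ σ))

theorem ιMulti_mem_relKaehlerSpan_of_map_eq_zero {n : ℕ} (v : Fin n → Ω[A⁄F]) (p : Fin n)
    (hv : map F F A (A ⧸ I) (v p) = 0) :
    exteriorPower.ιMulti A n v ∈ relKaehlerSpan F A I n := by
  obtain ⟨c, hc, hsub⟩ := exists_sub_D_mem_of_map_quotient_eq_zero F A I hv
  set L := (exteriorPower.ιMulti A n).toMultilinearMap.toLinearMap v p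
  have hI : I • ⊤ ≤ (relKaehlerSpan F A I n).comap L := Submodule.smul_le.2 fun r hr x _ => by
    simpa using ideal_smul_top_le_relKaehlerSpan F A I n (Submodule.smul_mem_smul hr trivial)
  have hD : L (D F A c) ∈ relKaehlerSpan F A I n :=
    ιMulti_mem_relKaehlerSpan_of_eq_D _ hc (Function.update_self p _ v)
  have hL : L (v p) ∈ relKaehlerSpan F A I n := by
    rw [← sub_add_cancel (v p) (D F A c), map_add]
    exact add_mem (hI hsub) hD
  simpa [L, MultilinearMap.toLinearMap_apply] using hL

variable (F A I)

theorem relKaehlerSpan_le_ker_kaehlerPowMap (n : ℕ) :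
    relKaehlerSpan F A I n ≤ LinearMap.ker (kaehlerPowMap F A (A ⧸ I) n) := by
  rw [relKaehlerSpan, Submodule.span_le]
  rintro ω ⟨a, ⟨p, hp⟩, hω⟩
  obtain rfl : ω = a 0 • exteriorPower.ιMulti A n (fun j => D F A (a j.succ)) := Subtype.ext hω
  have hmk : Ideal.Quotient.mk I (a p) = 0 := Ideal.Quotient.eq_zero_iff_mem.2 hp
  rw [SetLike.mem_coe, LinearMap.mem_ker, map_smul, kaehlerPowMap_ιMulti]
  rcases Fin.eq_zero_or_eq_succ p with rfl | ⟨q, rfl⟩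
  · rw [← algebraMap_smul (A ⧸ I), Ideal.Quotient.algebraMap_eq, hmk, zero_smul]
  · rw [AlternatingMap.map_coord_zero _ q (by simp [hmk]), smul_zero]

theorem ker_kaehlerPowMap_le_relKaehlerSpan (n : ℕ) :
    LinearMap.ker (kaehlerPowMap F A (A ⧸ I) n) ≤ relKaehlerSpan F A I n := by
  set S := relKaehlerSpan F A I n
  have htors : Module.IsTorsionBySet A (⋀[A]^n Ω[A⁄F] ⧸ S) I :=
    (Module.isTorsionBySet_quotient_iff _ _).2 fun x r hr =>
      ideal_smul_top_le_relKaehlerSpan F A I n (Submodule.smul_mem_smul hr trivial)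
  let := htors.module
  obtain ⟨β, hβ⟩ := AlternatingMap.exists_apply_comp_eq_of_surjective
    (Ideal.Quotient.mk_surjective (I := I))
    (map_surjective_of_surjective F F A (A ⧸ I) Ideal.Quotient.mk_surjective)
    (S.mkQ.compAlternatingMap (exteriorPower.ιMulti A n)) fun v p hp =>
      (Submodule.Quotient.mk_eq_zero _).2 (ιMulti_mem_relKaehlerSpan_of_map_eq_zero v p hp)
  have hcomp : (exteriorPower.alternatingMapLinearEquiv β).restrictScalars A ∘ₗ
      kaehlerPowMap F A (A ⧸ I) n = S.mkQ :=
    exteriorPower.linearMap_ext (AlternatingMap.ext fun v => by simp [kaehlerPowMap_ιMulti, hβ])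
  intro x hx
  rw [← Submodule.Quotient.mk_eq_zero, ← S.mkQ_apply, ← hcomp, LinearMap.comp_apply,
    LinearMap.mem_ker.1 hx, map_zero]

end

theorem relative_kaehler_power_generated_by_general
    (F A : Type*) [Field F] [CommRing A] [Algebra F A] (I : Ideal A) (i : ℕ) :
    LinearMap.ker (kaehlerPowMap F A (A ⧸ I) i) =
      Submodule.span A
        {ω : ⋀[A]^i (Ω[A⁄F]) | ∃ a : Fin (i + 1) → A, (∃ p, a p ∈ I) ∧
          (ω : ExteriorAlgebra A (Ω[A⁄F])) =
            a 0 • ExteriorAlgebra.ιMulti A i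
              (fun j : Fin i => KaehlerDifferential.D F A (a j.succ))} :=
  le_antisymm (ker_kaehlerPowMap_le_relKaehlerSpan F A I i)
    (relKaehlerSpan_le_ker_kaehlerPowMap F A I i)

/-- For a field `F`, a commutative `F`-algebra `A` and an ideal `I ⊆ A`,
for every `i ≥ 1` the kernel `Ω^i_{(A,I)/F}` of the natural map `Ω^i_{A/F} → Ω^i_{(A/I)/F}`
is generated as an `A`-module by the elements `a₀·da₁ ∧ ⋯ ∧ da_i` with some `a_p ∈ I`. -/
theorem relative_kaehler_power_generated_by
    (F A : Type*) [Field F] [CommRing A] [Algebra F A] (I : Ideal A) (i : ℕ) (hi : 1 ≤ i) :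
    LinearMap.ker (kaehlerPowMap F A (A ⧸ I) i) =
      Submodule.span A
        {ω : ⋀[A]^i (Ω[A⁄F]) | ∃ a : Fin (i + 1) → A, (∃ p, a p ∈ I) ∧
          (ω : ExteriorAlgebra A (Ω[A⁄F])) =
            a 0 • ExteriorAlgebra.ιMulti A i
              (fun j : Fin i => KaehlerDifferential.D F A (a j.succ))} :=
  relative_kaehler_power_generated_by_general F A I i
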